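/- Let λ be an infinite cardinal with λ ≤ 2^{ℵ0}, and let (u,e) be a 2-identity with λ → (u,e)_{ℵ0}. Then there exist n < ω and an injective map g : u → ^n2 such that for all 2-element subsets {x,y} and {x',y'} of u, if {x,y} e {x',y'} then g(x) ∩ g(y) = g(x') ∩ g(y'). -/

import Mathlib

open Cardinal

/-- A 2-identity `(u, e)`: `e` is an equivalence relation on the 2-element subsets of
`{0, …, u-1}` (coded as non-diagonal elements of `Sym2 (Fin u)`). -/
def Is2Identity {u : ℕ} (e : Sym2 (Fin u) → Sym2 (Fin u) → Prop) : Prop :=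
  (∀ p, ¬ p.IsDiag → e p p) ∧ (∀ p q, e p q → e q p) ∧
    (∀ p q r, e p q → e q r → e p r) ∧ (∀ p q, e p q → ¬ p.IsDiag ∧ ¬ q.IsDiag)

/-- `λ → (u, e)_μ` for a 2-identity: every pair-coloring of `λ` by `μ` colors realizes
`(u, e)`. -/
def ArrowsId2 (lam mu : Cardinal.{0}) {u : ℕ}
    (e : Sym2 (Fin u) → Sym2 (Fin u) → Prop) : Prop :=
  ∀ f : Sym2 (Quotient.out lam) → Quotient.out mu,
    ∃ h : Fin u ↪ Quotient.out lam,
      ∀ p q : Sym2 (Fin u), e p q → f (p.map h) = f (q.map h)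

/-- For sequences in `^n2`: the longest common initial segments of the pairs
`{η₁, η₂}` and `{ν₁, ν₂}` coincide. -/
def SeqMeetEq {n : ℕ} (η1 η2 ν1 ν2 : Fin n → Fin 2) : Prop :=
  ∃ k : ℕ, (∀ i : Fin n, (i : ℕ) < k → η1 i = η2 i ∧ ν1 i = ν2 i ∧ η1 i = ν1 i) ∧
    (∀ i : Fin n, (i : ℕ) = k → η1 i ≠ η2 i ∧ ν1 i ≠ ν2 i)

/-
Embed `λ` into Cantor space `ℕ → Fin 2` (possible as `λ ≤ 2^ℵ₀`) and colour a pair of points by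
their common initial segment, a finite sequence; there are only countably many colours. A
homogeneous copy of `(u, e)` for this colouring is a finite set of branches on which `e`-related
pairs have the same meet, and cutting all branches at a level above every splitting point keeps
them distinct and keeps the meets.
-/

namespace PiNat

variable {α : Type*}

/-- The common initial segment of `x` and `y`; `res` lists it in reverse order. -/
noncomputable def meet (x y : ℕ → α) : List α :=
  res x (firstDiff x y)

theorem meet_comm (x y : ℕ → α) : meet x y = meet y x := by
  rw [meet, meet, firstDiff_comm, res_eq_res]
  exact fun m hm => apply_eq_of_lt_firstDiff (firstDiff_comm x y ▸ hm)

variable {x y x' y' : ℕ → α}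

theorem firstDiff_eq_of_meet_eq (h : meet x y = meet x' y') :
    firstDiff x y = firstDiff x' y' := by
  simpa only [meet, res_length] using congrArg List.length h

theorem apply_eq_of_meet_eq (h : meet x y = meet x' y') {m : ℕ} (hm : m < firstDiff x y) :
    x m = x' m := by
  rw [meet, meet, ← firstDiff_eq_of_meet_eq h, res_eq_res] at h
  exact h hm

theorem exists_injective_restrict {ι : Type*} [Finite ι] {σ : ι → ℕ → α}
    (hσ : Function.Injective σ) : ∃ n, Function.Injective fun a (i : Fin n) => σ a i := by
  obtain ⟨n, hn⟩ := Finite.exists_le fun p : ι × ι => firstDiff (σ p.1) (σ p.2)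
  refine ⟨n + 1, fun a b hab => by_contra fun hne => ?_⟩
  have hlt : firstDiff (σ a) (σ b) < n + 1 := Nat.lt_succ_of_le (hn (a, b))
  exact apply_firstDiff_ne (hσ.ne hne) (congrFun hab ⟨_, hlt⟩)

theorem seqMeetEq_of_meet_eq {η₁ η₂ ν₁ ν₂ : ℕ → Fin 2} (hη : η₁ ≠ η₂) (hν : ν₁ ≠ ν₂)
    (h : meet η₁ η₂ = meet ν₁ ν₂) (n : ℕ) :
    SeqMeetEq (fun i : Fin n => η₁ i) (fun i => η₂ i) (fun i => ν₁ i) (fun i => ν₂ i) := by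
  have hk := firstDiff_eq_of_meet_eq h
  refine ⟨firstDiff η₁ η₂, fun i hi => ?_, fun i hi => ?_⟩
  · exact ⟨apply_eq_of_lt_firstDiff hi, apply_eq_of_lt_firstDiff (hk ▸ hi),
      apply_eq_of_meet_eq h hi⟩
  · show η₁ i ≠ η₂ i ∧ ν₁ i ≠ ν₂ i
    rw [hi]
    exact ⟨apply_firstDiff_ne hη, hk ▸ apply_firstDiff_ne hν⟩

end PiNat

open PiNat

theorem ArrowsId2.exists_homogeneous {lam mu : Cardinal.{0}} {u : ℕ}
    {e : Sym2 (Fin u) → Sym2 (Fin u) → Prop} (harr : ArrowsId2 lam mu e) {β : Type}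
    (hβ : #β ≤ mu) (c : Sym2 lam.out → β) :
    ∃ h : Fin u ↪ lam.out, ∀ p q, e p q → c (p.map h) = c (q.map h) := by
  obtain ⟨j⟩ : Nonempty (β ↪ mu.out) := by rwa [← le_def, mk_out]
  obtain ⟨h, hh⟩ := harr (j ∘ c)
  exact ⟨h, fun p q hpq => j.injective (hh p q hpq)⟩

theorem embeds_into_tree_identity_general (lam : Cardinal.{0})
    (hle : lam ≤ (2 : Cardinal.{0}) ^ ℵ₀)
    (u : ℕ) (e : Sym2 (Fin u) → Sym2 (Fin u) → Prop) (hid : Is2Identity e)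
    (harr : ArrowsId2 lam ℵ₀ e) :
    ∃ (n : ℕ) (g : Fin u → (Fin n → Fin 2)), Function.Injective g ∧
      ∀ x y x' y' : Fin u, e s(x, y) s(x', y') →
        SeqMeetEq (g x) (g y) (g x') (g y') := by
  obtain ⟨ι⟩ : Nonempty (lam.out ↪ (ℕ → Fin 2)) := by
    rwa [← le_def, mk_out, ← power_def, mk_fin, Nat.cast_ofNat, mk_nat]
  obtain ⟨h, hh⟩ := harr.exists_homogeneous (mk_le_aleph0 (α := List (Fin 2)))
    fun p => (p.map ι).lift ⟨meet, meet_comm⟩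
  have hσ : Function.Injective (ι ∘ h) := ι.injective.comp h.injective
  obtain ⟨n, hn⟩ := exists_injective_restrict hσ
  refine ⟨n, _, hn, fun x y x' y' hxy => ?_⟩
  have hne : ∀ {a b}, ¬ s(a, b).IsDiag → (ι ∘ h) a ≠ (ι ∘ h) b :=
    fun hd => hσ.ne (Sym2.mk_isDiag_iff.not.mp hd)
  obtain ⟨hd, hd'⟩ := hid.2.2.2 _ _ hxy
  exact seqMeetEq_of_meet_eq (hne hd) (hne hd') (by simpa using hh _ _ hxy) n

/-- (⁎)₁ in the proof of Claim t.3: if `λ ≤ 2^{ℵ₀}` and `(u, e)` is a 2-identity with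
`λ → (u, e)_{ℵ₀}`, then `(u, e)` embeds into `(^n2, e*_n)` for some `n`: there is an
injective `g : u → ^n2` such that `e`-related pairs have equal meets. -/
theorem embeds_into_tree_identity (lam : Cardinal.{0}) (hlam : ℵ₀ ≤ lam)
    (hle : lam ≤ (2 : Cardinal.{0}) ^ ℵ₀)
    (u : ℕ) (e : Sym2 (Fin u) → Sym2 (Fin u) → Prop) (hid : Is2Identity e)
    (harr : ArrowsId2 lam ℵ₀ e) :
    ∃ (n : ℕ) (g : Fin u → (Fin n → Fin 2)), Function.Injective g ∧
      ∀ x y x' y' : Fin u, e s(x, y) s(x', y') →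
        SeqMeetEq (g x) (g y) (g x') (g y') :=
  embeds_into_tree_identity_general lam hle u e hid harr
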